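/- arXiv:2502.06048 — 4 statements merged into one kernel-verified Lean document; each statement's English description precedes it below -/
import Mathlib

section
/- In every finite directed graph G, there exists an independent set U of vertices (no edges in either direction between distinct members of U, considering the underlying undirected adjacency) such that every vertex of G not in U is reachable from some vertex of U by a directed path of length at most 2. -/
lemma quasi_kernel_aux {V : Type*} [DecidableEq V] (E : V → V → Prop)
    (s : Finset V) :
    ∃ U : Finset V, U ⊆ s ∧
      (∀ u ∈ U, ∀ v ∈ U, u ≠ v → ¬E u v ∧ ¬E v u) ∧
      (∀ w ∈ s, w ∉ U → ∃ u ∈ U, E u w ∨ ∃ x ∈ s, E u x ∧ E x w) := by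
  classical
  induction s using Finset.strongInduction with
  | _ s ih =>
    rcases s.eq_empty_or_nonempty with rfl | ⟨v, hv⟩
    · exact ⟨∅, by simp⟩
    · set s' : Finset V := s.filter (fun w => w ≠ v ∧ ¬ E v w) with hs'
      have hsub : s' ⊂ s := by
        refine ⟨Finset.filter_subset _ _, fun hss => ?_⟩
        have := hss hv
        simp [hs'] at this
      obtain ⟨U', hU'sub, hind, hcov⟩ := ih s' hsub
      have hU's : ∀ u ∈ U', u ≠ v ∧ ¬ E v u := by
        intro u hu
        have := hU'sub hu
        exact (Finset.mem_filter.mp this).2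
      have hU'subs : U' ⊆ s := hU'sub.trans hsub.subset
      by_cases h : ∃ u ∈ U', E u v
      · obtain ⟨u₀, hu₀, hEu₀⟩ := h
        refine ⟨U', hU'subs, hind, ?_⟩
        intro w hw hwU
        by_cases hws' : w ∈ s'
        · obtain ⟨u, hu, hpath⟩ := hcov w hws' hwU
          exact ⟨u, hu, hpath.imp id (fun ⟨x, hx, hp⟩ => ⟨x, hsub.subset hx, hp⟩)⟩
        · have : w = v ∨ E v w := by
            by_contra hcon
            push_neg at hcon
            exact hws' (by simp [hs', hw, hcon.1, hcon.2])
          rcases this with rfl | hEvw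
          · exact ⟨u₀, hu₀, Or.inl hEu₀⟩
          · exact ⟨u₀, hu₀, Or.inr ⟨v, hv, hEu₀, hEvw⟩⟩
      · push_neg at h
        refine ⟨insert v U', Finset.insert_subset hv hU'subs, ?_, ?_⟩
        · intro a ha b hb hab
          rcases Finset.mem_insert.mp ha with rfl | ha' <;>
            rcases Finset.mem_insert.mp hb with rfl | hb'
          · exact absurd rfl hab
          · exact ⟨(hU's b hb').2, h b hb'⟩
          · exact ⟨h a ha', (hU's a ha').2⟩
          · exact hind a ha' b hb' hab
        · intro w hw hwU
          have hwv : w ≠ v := fun hwv => hwU (by simp [hwv])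
          have hwU' : w ∉ U' := fun hc => hwU (Finset.mem_insert_of_mem hc)
          by_cases hws' : w ∈ s'
          · obtain ⟨u, hu, hpath⟩ := hcov w hws' hwU'
            exact ⟨u, Finset.mem_insert_of_mem hu,
              hpath.imp id (fun ⟨x, hx, hp⟩ => ⟨x, hsub.subset hx, hp⟩)⟩
          · have hEvw : E v w := by
              by_contra hcon
              exact hws' (by simp [hs', hw, hwv, hcon])
            exact ⟨v, Finset.mem_insert_self _ _, Or.inl hEvw⟩

/-- In every finite directed graph there is an independent set `U` such that every vertex
outside `U` is reachable from some `u ∈ U` by a directed path of length at most 2. -/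
theorem stmt_0 {V : Type*} [Fintype V] (E : V → V → Prop) :
    ∃ U : Set V,
      (∀ u ∈ U, ∀ v ∈ U, u ≠ v → ¬E u v ∧ ¬E v u) ∧
      (∀ w : V, w ∉ U → ∃ u ∈ U, E u w ∨ ∃ x, E u x ∧ E x w) := by
  classical
  obtain ⟨U, -, hind, hcov⟩ := quasi_kernel_aux E (Finset.univ : Finset V)
  refine ⟨↑U, ?_, ?_⟩
  · intro u hu v hv huv
    exact hind u (by exact_mod_cast hu) v (by exact_mod_cast hv) huv
  · intro w hw
    obtain ⟨u, hu, hp⟩ := hcov w (Finset.mem_univ w) (by exact_mod_cast hw)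
    exact ⟨u, by exact_mod_cast hu, hp.imp id (fun ⟨x, _, hx⟩ => ⟨x, hx⟩)⟩
end

section
/- If a clique C of size k in an undirected graph G is fixed, and in the directed graph G' (from the clique-to-SCC reduction) we take S = { v_{{a,b}} : a, b ∈ C, {a,b} ∈ E(G) }, then the induced subgraph of G' on S is strongly connected, |S| = C(k,2), and the total neighborhood of S has size exactly k + |E(G)|. -/
/-- The directed graph `G'` of the clique-to-SCC reduction. -/
def redRel {V : Type*} (G : SimpleGraph V) :
    (V ⊕ (G.edgeSet ⊕ G.edgeSet)) → (V ⊕ (G.edgeSet ⊕ G.edgeSet)) → Prop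
  | Sum.inr (Sum.inl e1), Sum.inr (Sum.inl e2) => e1 ≠ e2
  | Sum.inr (Sum.inl e1), Sum.inr (Sum.inr e2) => e1 = e2
  | Sum.inr (Sum.inl e), Sum.inl a => a ∈ (e : Sym2 V)
  | _, _ => False

/-- Given a clique `C` of size `k ≥ 2` in `G`, the set `S` of edge-vertices with both
endpoints in `C` induces a strongly connected subgraph of `G'`, has `C(k,2)` elements,
and its total neighborhood has size exactly `k + |E(G)|`. -/
theorem stmt_8 {V : Type*} [Fintype V] [DecidableEq V] (G : SimpleGraph V) (k : ℕ)
    (hk : 2 ≤ k) (C : Finset V) (hCcard : C.card = k) (hCclq : G.IsClique (↑C : Set V)) :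
    (∀ a ∈ {x : V ⊕ (G.edgeSet ⊕ G.edgeSet) |
        ∃ e : G.edgeSet, x = Sum.inr (Sum.inl e) ∧ ∀ v ∈ (e : Sym2 V), v ∈ C},
      ∀ b ∈ {x : V ⊕ (G.edgeSet ⊕ G.edgeSet) |
        ∃ e : G.edgeSet, x = Sum.inr (Sum.inl e) ∧ ∀ v ∈ (e : Sym2 V), v ∈ C},
      Relation.ReflTransGen (fun x y =>
        x ∈ {x : V ⊕ (G.edgeSet ⊕ G.edgeSet) |
          ∃ e : G.edgeSet, x = Sum.inr (Sum.inl e) ∧ ∀ v ∈ (e : Sym2 V), v ∈ C} ∧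
        y ∈ {x : V ⊕ (G.edgeSet ⊕ G.edgeSet) |
          ∃ e : G.edgeSet, x = Sum.inr (Sum.inl e) ∧ ∀ v ∈ (e : Sym2 V), v ∈ C} ∧
        redRel G x y) a b) ∧
    {x : V ⊕ (G.edgeSet ⊕ G.edgeSet) |
      ∃ e : G.edgeSet, x = Sum.inr (Sum.inl e) ∧ ∀ v ∈ (e : Sym2 V), v ∈ C}.ncard
      = k.choose 2 ∧
    {v | v ∉ {x : V ⊕ (G.edgeSet ⊕ G.edgeSet) |
        ∃ e : G.edgeSet, x = Sum.inr (Sum.inl e) ∧ ∀ v ∈ (e : Sym2 V), v ∈ C} ∧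
      ∃ s ∈ {x : V ⊕ (G.edgeSet ⊕ G.edgeSet) |
        ∃ e : G.edgeSet, x = Sum.inr (Sum.inl e) ∧ ∀ v ∈ (e : Sym2 V), v ∈ C},
      redRel G s v ∨ redRel G v s}.ncard = k + G.edgeSet.ncard := by
  classical
  set T : Set G.edgeSet := {e | ∀ v ∈ (e : Sym2 V), v ∈ C} with hT
  set S : Set (V ⊕ (G.edgeSet ⊕ G.edgeSet)) :=
    {x | ∃ e : G.edgeSet, x = Sum.inr (Sum.inl e) ∧ ∀ v ∈ (e : Sym2 V), v ∈ C} with hS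
  -- every vertex of C lies on some clique edge
  have hT0 : ∀ a ∈ C, ∃ e ∈ T, a ∈ (e : Sym2 V) := by
    intro a ha
    have h1 : 1 < C.card := by omega
    obtain ⟨b, hb, hba⟩ := Finset.exists_mem_ne h1 a
    have hadj : G.Adj a b := hCclq ha hb (Ne.symm hba)
    refine ⟨⟨s(a, b), hadj⟩, ?_, ?_⟩
    · intro v hv
      rcases Sym2.mem_iff.mp hv with h | h <;> subst h
      exacts [ha, hb]
    · exact Sym2.mem_mk_left a b
  -- T nonempty
  have hTne : T.Nonempty := by
    obtain ⟨a, ha⟩ := Finset.card_pos.mp (by omega : 0 < C.card)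
    obtain ⟨e, he, -⟩ := hT0 a ha
    exact ⟨e, he⟩
  -- card of T
  have hf : ∀ p : Sym2 C, ¬p.IsDiag → Sym2.map Subtype.val p ∈ G.edgeSet := by
    intro p
    induction p using Sym2.ind with
    | _ a b =>
      intro h
      rw [Sym2.isDiag_iff_proj_eq] at h
      simpa [SimpleGraph.mem_edgeSet] using
        hCclq a.2 b.2 (fun hv => h (Subtype.ext hv))
  let f : {p : Sym2 C // ¬p.IsDiag} → G.edgeSet := fun p => ⟨Sym2.map Subtype.val p.1, hf p.1 p.2⟩
  have hfinj : Function.Injective f := by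
    intro p q h
    exact Subtype.ext (Sym2.map.injective Subtype.val_injective
      (congrArg Subtype.val h))
  have hfr : Set.range f = T := by
    ext e
    constructor
    · rintro ⟨p, rfl⟩
      intro v hv
      simp only [f, Sym2.mem_map] at hv
      obtain ⟨⟨w, hw⟩, -, rfl⟩ := hv
      exact hw
    · intro he
      obtain ⟨s, hs⟩ := e
      induction s using Sym2.ind with
      | _ a b =>
        have ha : a ∈ C := he a (Sym2.mem_mk_left a b)
        have hb : b ∈ C := he b (Sym2.mem_mk_right a b)
        have hne : a ≠ b := (G.mem_edgeSet.mp hs).ne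
        refine ⟨⟨s(⟨a, ha⟩, ⟨b, hb⟩), ?_⟩, ?_⟩
        · rw [Sym2.isDiag_iff_proj_eq]
          exact fun h => hne (congrArg Subtype.val h)
        · exact Subtype.ext (Sym2.map_pair_eq ..)
  have hTcard : T.ncard = k.choose 2 := by
    rw [← hfr, ← Nat.card_coe_set_eq, Nat.card_range_of_injective hfinj,
      Nat.card_eq_fintype_card, Sym2.card_subtype_not_diag, Fintype.card_coe, hCcard]
  refine ⟨?_, ?_, ?_⟩
  · -- strong connectivity
    intro a ha b hb
    by_cases hab : a = b
    · subst hab; exact Relation.ReflTransGen.refl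
    · refine Relation.ReflTransGen.single ⟨ha, hb, ?_⟩
      obtain ⟨e1, rfl, -⟩ := ha
      obtain ⟨e2, rfl, -⟩ := hb
      show e1 ≠ e2
      exact fun h => hab (by rw [h])
  · -- |S| = C(k,2)
    have : S = (fun e => Sum.inr (Sum.inl e)) '' T := by
      ext x
      simp only [hS, Set.mem_setOf_eq, Set.mem_image, hT]
      constructor
      · rintro ⟨e, rfl, he⟩; exact ⟨e, he, rfl⟩
      · rintro ⟨e, he, rfl⟩; exact ⟨e, rfl, he⟩
    rw [this, Set.ncard_image_of_injective _
        (fun a b h => Sum.inl_injective (Sum.inr_injective h)), hTcard]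
  · -- neighborhood
    have hNS : {v | v ∉ S ∧ ∃ s ∈ S, redRel G s v ∨ redRel G v s} =
        Sum.inl '' (↑C : Set V) ∪
          ((fun e => Sum.inr (Sum.inl e)) '' Tᶜ ∪ (fun e => Sum.inr (Sum.inr e)) '' T) := by
      ext x
      rcases x with a | e' | e'
      · simp only [Set.mem_setOf_eq, Set.mem_union, Set.mem_image, hS]
        constructor
        · rintro ⟨-, s, ⟨e, rfl, he⟩, h | h⟩
          · exact Or.inl ⟨a, he a h, rfl⟩
          · exact absurd h (by exact id)
        · rintro (⟨a, ha, h⟩ | ⟨e, -, h⟩ | ⟨e, -, h⟩)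
          · cases h
            obtain ⟨e, he, hae⟩ := hT0 a ha
            refine ⟨(by rintro ⟨e, h, -⟩; cases h), Sum.inr (Sum.inl e), ⟨e, rfl, he⟩, Or.inl hae⟩
          · cases h
          · cases h
      · simp only [Set.mem_setOf_eq, Set.mem_union, Set.mem_image, hS]
        constructor
        · rintro ⟨hnot, s, ⟨e, rfl, he⟩, h | h⟩ <;>
            exact Or.inr (Or.inl ⟨e', fun hc => hnot ⟨e', rfl, hc⟩, rfl⟩)
        · rintro (⟨a, -, h⟩ | ⟨e, he, h⟩ | ⟨e, -, h⟩)
          · cases h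
          · cases h
            obtain ⟨e0, he0⟩ := hTne
            have hne : e0 ≠ e' := fun h => he (h ▸ he0)
            refine ⟨?_, Sum.inr (Sum.inl e0), ⟨e0, rfl, he0⟩, Or.inl hne⟩
            rintro ⟨e, h, hc⟩
            cases h
            exact he hc
          · cases h
      · simp only [Set.mem_setOf_eq, Set.mem_union, Set.mem_image, hS]
        constructor
        · rintro ⟨-, s, ⟨e, rfl, he⟩, h | h⟩
          · exact Or.inr (Or.inr ⟨e', h ▸ he, rfl⟩)
          · exact absurd h (by exact id)
        · rintro (⟨a, -, h⟩ | ⟨e, -, h⟩ | ⟨e, he, h⟩)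
          · cases h
          · cases h
          · cases h
            refine ⟨(by rintro ⟨e, h, -⟩; cases h), Sum.inr (Sum.inl e'), ⟨e', rfl, he⟩,
              Or.inl rfl⟩
    rw [hNS]
    have hd1 : Disjoint (Sum.inl '' (↑C : Set V))
        ((fun e => Sum.inr (Sum.inl e)) '' Tᶜ ∪ (fun e => Sum.inr (Sum.inr e)) '' T) := by
      rw [Set.disjoint_left]
      rintro x ⟨a, -, rfl⟩ (⟨e, -, h⟩ | ⟨e, -, h⟩) <;> cases h
    have hd2 : Disjoint ((fun e : G.edgeSet => Sum.inr (Sum.inl e) :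
          G.edgeSet → V ⊕ (G.edgeSet ⊕ G.edgeSet)) '' Tᶜ)
        ((fun e => Sum.inr (Sum.inr e)) '' T) := by
      rw [Set.disjoint_left]
      rintro x ⟨e, -, rfl⟩ ⟨e', -, h⟩
      cases h
    rw [Set.ncard_union_eq hd1 (Set.toFinite _) (Set.toFinite _),
      Set.ncard_union_eq hd2 (Set.toFinite _) (Set.toFinite _),
      Set.ncard_image_of_injective _ Sum.inl_injective, Set.ncard_coe_finset, hCcard,
      Set.ncard_image_of_injective _
        (fun a b h => Sum.inl_injective (Sum.inr_injective h) : Function.Injective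
          (fun e : G.edgeSet => (Sum.inr (Sum.inl e) : V ⊕ (G.edgeSet ⊕ G.edgeSet)))),
      Set.ncard_image_of_injective _
        (fun a b h => Sum.inr_injective (Sum.inr_injective h) : Function.Injective
          (fun e : G.edgeSet => (Sum.inr (Sum.inr e) : V ⊕ (G.edgeSet ⊕ G.edgeSet))))]
    have : Tᶜ.ncard + T.ncard = G.edgeSet.ncard := by
      rw [Nat.add_comm, Set.ncard_add_ncard_compl T (Set.toFinite _) (Set.toFinite _),
        Nat.card_coe_set_eq]
    omega
end

section
/- Let G be an undirected graph, u a vertex, and suppose the closed neighborhood N[u] induces a clique. Let S be a clique containing u with S ⊆ N[u] and minimizing |N(S)| among maximum-weight such cliques, with nonnegative vertex weights. If v ∈ N(u) has exactly one neighbor v₂ outside N[u], then there is an optimal solution S (same weight, |N(S)| not larger) with v ∈ S. -/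
/-- The open neighborhood of a vertex set. -/
def nbSet {V : Type*} (G : SimpleGraph V) (A : Set V) : Set V :=
  {x | x ∉ A ∧ ∃ a ∈ A, G.Adj a x}

/-- Exchange argument for branching Case 2a of the secluded clique algorithm: if `N[u]`
is a clique and `v ∈ N(u)` has exactly one neighbor `v₂` outside `N[u]`, then for any
clique solution `S ∌ v` with `u ∈ S ⊆ N[u]`, adding `v` keeps a clique, does not decrease
the weight, and does not increase the neighborhood size. -/
theorem stmt_14 {V : Type*} [Fintype V] [DecidableEq V] (G : SimpleGraph V) (ω : V → ℕ)
    (u v v₂ : V) (hclo : G.IsClique (insert u (G.neighborSet u)))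
    (hv : G.Adj u v) (hv2out : v₂ ∉ insert u (G.neighborSet u))
    (hv2 : G.neighborSet v \ insert u (G.neighborSet u) = {v₂})
    (S : Finset V) (huS : u ∈ S) (hSsub : ↑S ⊆ insert u (G.neighborSet u))
    (hSclq : G.IsClique (↑S : Set V)) (hvS : v ∉ S) :
    G.IsClique (↑(insert v S) : Set V) ∧
    ∑ x ∈ S, ω x ≤ ∑ x ∈ insert v S, ω x ∧
    nbSet G ↑(insert v S) ⊆ (nbSet G ↑S \ {v}) ∪ {v₂} ∧
    (nbSet G ↑(insert v S)).ncard ≤ (nbSet G ↑S).ncard := by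
  have hvN : v ∈ (insert u (G.neighborSet u) : Set V) := Set.mem_insert_of_mem _ hv
  have hclq : G.IsClique (↑(insert v S) : Set V) := by
    apply hclo.subset
    intro x hx
    simp only [Finset.coe_insert, Set.mem_insert_iff] at hx
    rcases hx with rfl | hx
    · exact hvN
    · exact hSsub hx
  have hvSnb : v ∈ nbSet G (↑S : Set V) := by
    refine ⟨by simpa using hvS, u, by simpa using huS, hv⟩
  have hsub : nbSet G ↑(insert v S) ⊆ (nbSet G ↑S \ {v}) ∪ {v₂} := by
    rintro x ⟨hxout, a, ha, hax⟩
    simp only [Finset.coe_insert, Set.mem_insert_iff, not_or] at hxout ha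
    obtain ⟨hxv, hxS⟩ := hxout
    have hxnbS : x ∈ G.neighborSet u → x ∈ (nbSet G ↑S \ {v}) ∪ {v₂} := by
      intro hxu
      exact Or.inl ⟨⟨hxS, u, by simpa using huS, hxu⟩, hxv⟩
    rcases ha with h | ha
    · -- witness is v
      rw [h] at hax
      by_cases hxN : x ∈ (insert u (G.neighborSet u) : Set V)
      · rcases hxN with rfl | hxN
        · exact absurd (by simpa using huS) hxS
        · exact hxnbS hxN
      · have : x ∈ G.neighborSet v \ insert u (G.neighborSet u) := ⟨hax, hxN⟩
        rw [hv2] at this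
        exact Or.inr this
    · exact Or.inl ⟨⟨hxS, a, ha, hax⟩, hxv⟩
  refine ⟨hclq, ?_, hsub, ?_⟩
  · rw [Finset.sum_insert hvS]; omega
  · have hfin : (nbSet G (↑S : Set V)).Finite := Set.toFinite _
    calc (nbSet G ↑(insert v S)).ncard
        ≤ ((nbSet G ↑S \ {v}) ∪ {v₂}).ncard := Set.ncard_le_ncard hsub (Set.toFinite _)
      _ ≤ (nbSet G ↑S \ {v}).ncard + 1 := by
          simpa using Set.ncard_union_le (nbSet G ↑S \ {v}) {v₂}
      _ ≤ (nbSet G ↑S).ncard := by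
          have := Set.ncard_diff_singleton_add_one hvSnb hfin
          omega
end

section
/- Let G be an undirected graph, u a vertex, and v₁, v₂ ∈ N(u) nonadjacent vertices such that neither v₁ nor v₂ has any neighbor outside N[u], and such that v₁ and v₂ have the same neighborhood within N[u] \ {v₁, v₂}. If ω(v₁) ≤ ω(v₂), then for every clique S ⊆ N[u] containing u with v₁ ∈ S, the set S' = (S \ {v₁}) ∪ {v₂} is a clique containing u with ω(S') ≥ ω(S) and |N(S')| ≤ |N(S)|. -/
/-- Twin exchange for the secluded clique algorithm (Case 1b): if `v₁, v₂ ∈ N(u)` are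
nonadjacent twins whose neighborhoods lie in `N[u]` and `ω(v₁) ≤ ω(v₂)`, then swapping
`v₁` for `v₂` in any clique solution keeps a clique containing `u`, does not decrease the
weight, and does not increase the neighborhood size. -/
theorem stmt_15 {V : Type*} [Fintype V] [DecidableEq V] (G : SimpleGraph V) (ω : V → ℕ)
    (u v₁ v₂ : V) (hne : v₁ ≠ v₂)
    (h1 : G.Adj u v₁) (h2 : G.Adj u v₂) (hnadj : ¬G.Adj v₁ v₂)
    (hn1 : G.neighborSet v₁ ⊆ insert u (G.neighborSet u))
    (hn2 : G.neighborSet v₂ ⊆ insert u (G.neighborSet u))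
    (htwin : G.neighborSet v₁ \ {v₂} = G.neighborSet v₂ \ {v₁})
    (hw : ω v₁ ≤ ω v₂)
    (S : Finset V) (huS : u ∈ S) (hSsub : ↑S ⊆ insert u (G.neighborSet u))
    (hSclq : G.IsClique (↑S : Set V)) (hv1S : v₁ ∈ S) :
    u ∈ insert v₂ (S.erase v₁) ∧
    G.IsClique (↑(insert v₂ (S.erase v₁)) : Set V) ∧
    ∑ x ∈ S, ω x ≤ ∑ x ∈ insert v₂ (S.erase v₁), ω x ∧
    (nbSet G ↑(insert v₂ (S.erase v₁))).ncard ≤ (nbSet G ↑S).ncard := by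
  have huv1 : u ≠ v₁ := G.ne_of_adj h1
  have huv2 : u ≠ v₂ := G.ne_of_adj h2
  have hv2S : v₂ ∉ S := by
    intro h
    exact hnadj (hSclq hv1S h hne)
  -- twin transfer: a neighbor of v₁ other than v₂ is a neighbor of v₂
  have htr : ∀ b, G.Adj v₁ b → b ≠ v₂ → G.Adj v₂ b := by
    intro b hb hbv2
    have : b ∈ G.neighborSet v₁ \ {v₂} := ⟨hb, hbv2⟩
    rw [htwin] at this
    exact this.1
  have huS' : u ∈ insert v₂ (S.erase v₁) :=
    Finset.mem_insert_of_mem (Finset.mem_erase.mpr ⟨huv1, huS⟩)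
  have hclq' : G.IsClique (↑(insert v₂ (S.erase v₁)) : Set V) := by
    rw [Finset.coe_insert, Finset.coe_erase]
    refine (hSclq.subset (by simp [Set.diff_subset])).insert ?_
    rintro b ⟨hbS, hbv1⟩ hbv2
    have hbv1' : b ≠ v₁ := hbv1
    have : G.Adj v₁ b := hSclq hv1S hbS (Ne.symm hbv1')
    exact htr b this (Ne.symm hbv2)
  refine ⟨huS', hclq', ?_, ?_⟩
  · have h1' : ∑ x ∈ S.erase v₁, ω x + ω v₁ = ∑ x ∈ S, ω x :=
      Finset.sum_erase_add S ω hv1S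
    have h2' : ∑ x ∈ insert v₂ (S.erase v₁), ω x = ω v₂ + ∑ x ∈ S.erase v₁, ω x :=
      Finset.sum_insert (fun h => hv2S (Finset.mem_of_mem_erase h))
    omega
  · set S' := insert v₂ (S.erase v₁) with hS'
    have hv2S' : v₂ ∈ (↑S' : Set V) := by simp [hS']
    -- the map sending v₁ ↦ v₂ and fixing everything else injects nbSet S' into nbSet S
    set f : V → V := fun x => if x = v₁ then v₂ else x with hf
    have hmap : ∀ x ∈ nbSet G (↑S' : Set V), f x ∈ nbSet G (↑S : Set V) := by
      rintro x ⟨hxS', a, haS', hax⟩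
      by_cases hx1 : x = v₁
      · subst hx1
        simp only [hf, if_pos rfl]
        exact ⟨fun h => hv2S (Finset.mem_coe.mp h), u, huS, h2⟩
      · simp only [hf, if_neg hx1]
        have hxS : x ∉ (↑S : Set V) := by
          intro h
          apply hxS'
          by_cases hx2 : x = v₂
          · subst hx2; exact hv2S'
          · simp only [hS', Finset.coe_insert, Finset.coe_erase]
            exact Set.mem_insert_of_mem _ ⟨h, hx1⟩
        rcases Finset.mem_insert.mp (Finset.mem_coe.mp haS') with ha2 | haE
        · have hax2 : G.Adj v₂ x := ha2 ▸ hax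
          have hx1' : x ∈ G.neighborSet v₂ \ {v₁} := ⟨hax2, hx1⟩
          rw [← htwin] at hx1'
          exact ⟨hxS, v₁, hv1S, hx1'.1⟩
        · exact ⟨hxS, a, Finset.mem_of_mem_erase haE, hax⟩
    have hinj : Set.InjOn f (nbSet G (↑S' : Set V)) := by
      intro x hx y hy hxy
      have hv2notin : v₂ ∉ nbSet G (↑S' : Set V) := fun h => h.1 hv2S'
      by_cases hx1 : x = v₁ <;> by_cases hy1 : y = v₁
      · rw [hx1, hy1]
      · simp only [hf, if_pos hx1, if_neg hy1] at hxy
        exact absurd (hxy ▸ hy) hv2notin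
      · simp only [hf, if_neg hx1, if_pos hy1] at hxy
        exact absurd (hxy ▸ hx) hv2notin
      · simpa only [hf, if_neg hx1, if_neg hy1] using hxy
    calc (nbSet G (↑S' : Set V)).ncard
        = (f '' nbSet G (↑S' : Set V)).ncard := (Set.ncard_image_of_injOn hinj).symm
      _ ≤ (nbSet G (↑S : Set V)).ncard := by
          apply Set.ncard_le_ncard _ (Set.toFinite _)
          rintro y ⟨x, hx, rfl⟩
          exact hmap x hx
end
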